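/- Let n > 2m and −n < α < n − 4m. Then for all u ∈ C^{2m}_c(ℝⁿ \ {0}), ∫_{ℝⁿ} |Δ^m u|² |x|^{−α} dx ≥ (∏_{ℓ=0}^{m−1} A_{α+4ℓ}²) ∫_{ℝⁿ} u² |x|^{−α−4m} dx, where A_β = (n+β)(n−4−β)/4. -/

import Mathlib

open MeasureTheory Real RealInnerProductSpace

noncomputable section

abbrev Euc (n : ℕ) := EuclideanSpace ℝ (Fin n)

/-- radial derivative ∂_r f = (x/|x|)·∇f -/
noncomputable def rDeriv (n : ℕ) (f : Euc n → ℝ) (x : Euc n) : ℝ :=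
  inner ℝ x (gradient f x) / ‖x‖

/-- T_α f = ∂_r f + ((n-2-α)/(2r)) f -/
noncomputable def Tw (n : ℕ) (α : ℝ) (f : Euc n → ℝ) (x : Euc n) : ℝ :=
  rDeriv n f x + (((n : ℝ) - 2 - α) / (2 * ‖x‖)) * f x

/-- spherical derivative L_j f = ∂_j f − (x_j/r) ∂_r f -/
noncomputable def Lop (n : ℕ) (j : Fin n) (f : Euc n → ℝ) (x : Euc n) : ℝ :=
  fderiv ℝ f x (EuclideanSpace.single j 1) - (x j / ‖x‖) * rDeriv n f x

/-- Euclidean Laplacian as sum of second partial derivatives -/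
noncomputable def lap (n : ℕ) (f : Euc n → ℝ) (x : Euc n) : ℝ :=
  ∑ j : Fin n,
    fderiv ℝ (fun y => fderiv ℝ f y (EuclideanSpace.single j 1)) x (EuclideanSpace.single j 1)

/-- radial Laplacian Δ_r = ∂_r² + ((n−1)/r) ∂_r -/
noncomputable def lapr (n : ℕ) (f : Euc n → ℝ) (x : Euc n) : ℝ :=
  rDeriv n (rDeriv n f) x + (((n : ℝ) - 1) / ‖x‖) * rDeriv n f x

/-- weighted L² norm squared: ‖g‖_β² = ∫ |g|² |x|^{−β} -/
noncomputable def wnorm2 (n : ℕ) (β : ℝ) (g : Euc n → ℝ) : ℝ :=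
  ∫ x : Euc n, (g x) ^ 2 * ‖x‖ ^ (-β)

end

/-!
Iterating the case `m = 1` along `Δ^{m-1} u, …, Δu, u` at the weights `α, α + 4, …` gives the
product of constants, so everything rests on the weighted Rellich inequality
`∫ (Δv)² |x|^{-β} ≥ A_β² ∫ v² |x|^{-β-4}` for `-n ≤ β ≤ n - 4`. Since `v` vanishes near `0`,
the only integration by parts needed is against the weight,
`∫ ∂_w f · |x|^p = -p ∫ f ⟪x, w⟫ |x|^{p-2}`. It yields
`∫ v (x·∇v) |x|^p = -(n+p)/2 ∫ v² |x|^p` and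
`∫ Δv · v |x|^p = -∫ |∇v|² |x|^p - p ∫ v (x·∇v) |x|^{p-2}`, while expanding
`∫ | |x|² ∇v + c v x |² |x|^{p-4} ≥ 0` with `c = (n+p-2)/2` gives the Hardy inequality
`c² ∫ v² |x|^{p-2} ≤ ∫ |∇v|² |x|^p`. Together they give
`∫ Δv · v |x|^{-β-2} ≤ -A_β ∫ v² |x|^{-β-4}`, and expanding
`∫ (|x|² Δv + A_β v)² |x|^{-β-4} ≥ 0` turns this into the Rellich inequality when `A_β ≥ 0`.
-/

section WeightedIntegration

variable {E : Type*} [NormedAddCommGroup E]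

theorem norm_pow_mul_rpow_sub {x : E} (hx : x ≠ 0) (k : ℕ) (p : ℝ) :
    ‖x‖ ^ k * ‖x‖ ^ (p - k) = ‖x‖ ^ p := by
  rw [← Real.rpow_natCast, ← Real.rpow_add (norm_pos_iff.2 hx)]
  ring_nf

theorem continuous_mul_norm_rpow {φ : E → ℝ} (hφ : Continuous φ) (h0 : (0 : E) ∉ tsupport φ)
    (p : ℝ) : Continuous fun x => φ x * ‖x‖ ^ p :=
  ContinuousOn.continuous_of_tsupport_subset
    (hφ.continuousOn.mul fun _ hx =>
      (continuous_norm.continuousAt.rpow_const (.inl (norm_ne_zero_iff.2 hx))).continuousWithinAt)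
    isOpen_compl_singleton
    (tsupport_mul_subset_left.trans fun _ hx h => h0 (h ▸ hx))

theorem integrable_mul_norm_rpow [MeasurableSpace E] [OpensMeasurableSpace E] {μ : Measure E}
    [IsFiniteMeasureOnCompacts μ] {K : Set E} (hK : IsCompact K) (h0 : (0 : E) ∉ K)
    {φ : E → ℝ} (hφ : Continuous φ) (hφK : ∀ x ∉ K, φ x = 0) (p : ℝ) :
    Integrable (fun x => φ x * ‖x‖ ^ p) μ := by
  have hsub : tsupport φ ⊆ K :=
    closure_minimal (Function.support_subset_iff'.2 hφK) hK.isClosed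
  exact (continuous_mul_norm_rpow hφ (h0 ∘ @hsub 0) p).integrable_of_hasCompactSupport
    (HasCompactSupport.intro hK fun x hx => by simp [hφK x hx])

theorem integrable_fderiv_apply_mul_norm_rpow [NormedSpace ℝ E] [MeasurableSpace E]
    [OpensMeasurableSpace E] {μ : Measure E} [IsFiniteMeasureOnCompacts μ] {K : Set E}
    (hK : IsCompact K) (h0 : (0 : E) ∉ K) {f : E → ℝ} (hf : ContDiff ℝ 1 f)
    (hfK : ∀ x ∉ K, f x = 0) (p : ℝ) (w : E) :
    Integrable (fun x => fderiv ℝ f x w * ‖x‖ ^ p) μ :=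
  integrable_mul_norm_rpow hK h0 ((hf.continuous_fderiv one_ne_zero).clm_apply continuous_const)
    (fun x hx => by
      simp [fderiv_of_notMem_tsupport ℝ fun h =>
        hx (closure_minimal (Function.support_subset_iff'.2 hfK) hK.isClosed h)]) p

variable [InnerProductSpace ℝ E]

theorem hasFDerivAt_norm_rpow_of_ne_zero {x : E} (hx : x ≠ 0) (p : ℝ) :
    HasFDerivAt (fun y : E => ‖y‖ ^ p) ((p * ‖x‖ ^ (p - 2)) • innerSL ℝ x) x := by
  convert! ((hasStrictFDerivAt_norm_sq x).rpow_const (p := p / 2) (by simp [hx])).hasFDerivAt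
    using 1
  · ext y
    rw [← Real.rpow_natCast_mul (norm_nonneg _)]
    ring_nf
  · simp_rw [← Real.rpow_natCast_mul (norm_nonneg _), ← Nat.cast_smul_eq_nsmul ℝ, smul_smul]
    ring_nf

theorem fderiv_norm_rpow_apply {x : E} (hx : x ≠ 0) (p : ℝ) (w : E) :
    fderiv ℝ (fun y : E => ‖y‖ ^ p) x w = p * ‖x‖ ^ (p - 2) * ⟪x, w⟫ := by
  simp [(hasFDerivAt_norm_rpow_of_ne_zero hx p).fderiv]

variable [FiniteDimensional ℝ E] [MeasurableSpace E] [BorelSpace E] {μ : Measure E}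
  [μ.IsAddHaarMeasure] {K : Set E}

theorem integral_fderiv_mul_norm_rpow (hK : IsCompact K) (h0 : (0 : E) ∉ K) {f : E → ℝ}
    (hf : ContDiff ℝ 1 f) (hfK : ∀ x ∉ K, f x = 0) (p : ℝ) (w : E) :
    ∫ x, fderiv ℝ f x w * ‖x‖ ^ p ∂μ = -p * ∫ x, f x * ⟪x, w⟫ * ‖x‖ ^ (p - 2) ∂μ := by
  have hsub : tsupport f ⊆ K :=
    closure_minimal (Function.support_subset_iff'.2 hfK) hK.isClosed
  have hne : ∀ x ∈ tsupport f, x ≠ 0 := fun x hx h => h0 (h ▸ hsub hx)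
  have hweight : ∀ x, f x * fderiv ℝ (fun y : E => ‖y‖ ^ p) x w
      = p * (f x * ⟪x, w⟫ * ‖x‖ ^ (p - 2)) := fun x => by
    by_cases hx : x ∈ tsupport f
    · rw [fderiv_norm_rpow_apply (hne x hx)]; ring
    · simp [image_eq_zero_of_notMem_tsupport hx]
  calc ∫ x, fderiv ℝ f x w * ‖x‖ ^ p ∂μ
      = -∫ x, f x * fderiv ℝ (fun y : E => ‖y‖ ^ p) x w ∂μ := by
        refine neg_eq_iff_eq_neg.1 (integral_mul_fderiv_eq_neg_fderiv_mul_of_integrable ?_ ?_ ?_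
          (fun x _ => (hf.differentiable one_ne_zero) x)
          (fun x hx => (hasFDerivAt_norm_rpow_of_ne_zero (hne x hx) p).differentiableAt)).symm
        · exact integrable_fderiv_apply_mul_norm_rpow hK h0 hf hfK p w
        · simp_rw [hweight]
          exact (integrable_mul_norm_rpow hK h0 (by fun_prop)
            (fun x hx => by simp [hfK x hx]) (p - 2)).const_mul p
        · exact integrable_mul_norm_rpow hK h0 hf.continuous hfK p
    _ = -p * ∫ x, f x * ⟪x, w⟫ * ‖x‖ ^ (p - 2) ∂μ := by
        simp_rw [hweight, integral_const_mul]
        ring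

theorem integral_sum_fderiv_mul_norm_rpow {ι : Type*} [Fintype ι] (hK : IsCompact K)
    (h0 : (0 : E) ∉ K) {f : ι → E → ℝ} (hf : ∀ i, ContDiff ℝ 1 (f i))
    (hfK : ∀ i, ∀ x ∉ K, f i x = 0) (p : ℝ) (w : ι → E) :
    ∫ x, (∑ i, fderiv ℝ (f i) x (w i)) * ‖x‖ ^ p ∂μ
      = -p * ∫ x, (∑ i, f i x * ⟪x, w i⟫) * ‖x‖ ^ (p - 2) ∂μ := by
  simp only [Finset.sum_mul]
  rw [integral_finsetSum, integral_finsetSum, Finset.mul_sum]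
  · exact Finset.sum_congr rfl fun i _ => integral_fderiv_mul_norm_rpow hK h0 (hf i) (hfK i) p _
  · exact fun i _ => integrable_mul_norm_rpow hK h0 (by fun_prop)
      (fun x hx => by simp [hfK i x hx]) _
  · exact fun i _ => integrable_fderiv_apply_mul_norm_rpow hK h0 (hf i) (hfK i) p (w i)

end WeightedIntegration

section Euclidean

variable {n : ℕ}

local notation "𝐞" j:max => EuclideanSpace.single j (1 : ℝ)

theorem fderiv_coord_apply (x w : Euc n) (j : Fin n) :
    fderiv ℝ (fun y : Euc n => y j) x w = w j := by
  rw [(PiLp.hasFDerivAt_apply (𝕜 := ℝ) 2 x j).fderiv]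
  rfl

theorem lap_of_notMem_tsupport {f : Euc n → ℝ} {x : Euc n} (hx : x ∉ tsupport f) :
    lap n f x = 0 :=
  Finset.sum_eq_zero fun j _ => by
    rw [fderiv_of_notMem_tsupport ℝ fun h => hx (tsupport_fderiv_apply_subset ℝ _ h)]
    rfl

theorem tsupport_lap_subset (f : Euc n → ℝ) : tsupport (lap n f) ⊆ tsupport f :=
  closure_minimal (fun _ hx => by_contra fun h => hx (lap_of_notMem_tsupport h))
    (isClosed_tsupport f)

theorem ContDiff.lap {k : ℕ} {f : Euc n → ℝ} (hf : ContDiff ℝ (k + 2 : ℕ) f) :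
    ContDiff ℝ k (lap n f) := by
  refine ContDiff.sum fun j _ => ?_
  have h : ContDiff ℝ (k + 1 : ℕ) fun y => fderiv ℝ f y (𝐞 j) :=
    (hf.fderiv_right (m := (k + 1 : ℕ)) (by norm_cast)).clm_apply contDiff_const
  exact (h.fderiv_right (m := k) (by norm_cast)).clm_apply contDiff_const

/-- `x · ∇v = |x| ∂ᵣ v`. -/
noncomputable def eulerDeriv (v : Euc n → ℝ) (x : Euc n) : ℝ := ∑ j, x j * fderiv ℝ v x (𝐞 j)

noncomputable def gradNormSq (v : Euc n → ℝ) (x : Euc n) : ℝ := ∑ j, fderiv ℝ v x (𝐞 j) ^ 2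

theorem ContDiff.continuous_eulerDeriv {v : Euc n → ℝ} (hv : ContDiff ℝ 1 v) :
    Continuous (eulerDeriv v) :=
  continuous_finsetSum _ fun j _ => (PiLp.continuous_apply 2 _ j).mul
    ((hv.continuous_fderiv one_ne_zero).clm_apply continuous_const)

theorem ContDiff.continuous_gradNormSq {v : Euc n → ℝ} (hv : ContDiff ℝ 1 v) :
    Continuous (gradNormSq v) :=
  continuous_finsetSum _ fun _ _ =>
    ((hv.continuous_fderiv one_ne_zero).clm_apply continuous_const).pow 2

section TestFunction

variable {v : Euc n → ℝ}

theorem integral_mul_eulerDeriv_mul_norm_rpow (hv : ContDiff ℝ 1 v)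
    (hvc : HasCompactSupport v) (hv0 : (0 : Euc n) ∉ tsupport v) (p : ℝ) :
    ∫ x, v x * eulerDeriv v x * ‖x‖ ^ p = -((n + p) / 2) * ∫ x, v x ^ 2 * ‖x‖ ^ p := by
  have hE := hv.continuous_eulerDeriv
  have hvK : ∀ x ∉ tsupport v, v x = 0 := fun _ => image_eq_zero_of_notMem_tsupport
  have hdiv : ∀ x, (∑ j, fderiv ℝ (fun y => v y ^ 2 * y j) x (𝐞 j)) * ‖x‖ ^ p
      = 2 * (v x * eulerDeriv v x * ‖x‖ ^ p) + n * (v x ^ 2 * ‖x‖ ^ p) := fun x => by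
    have hvd := hv.differentiable one_ne_zero x
    have hj : ∀ j, fderiv ℝ (fun y => v y ^ 2 * y j) x (𝐞 j)
        = 2 * v x * (x j * fderiv ℝ v x (𝐞 j)) + v x ^ 2 := fun j => by
      rw [fderiv_fun_mul (by fun_prop) (by fun_prop)]
      simp [fderiv_fun_pow, hvd, fderiv_coord_apply]
      ring
    simp only [hj, Finset.sum_add_distrib, ← Finset.mul_sum, Finset.sum_const, Finset.card_univ,
      Fintype.card_fin, nsmul_eq_mul, eulerDeriv]
    ring
  have hrad : ∀ x, (∑ j, v x ^ 2 * x j * ⟪x, 𝐞 j⟫) * ‖x‖ ^ (p - 2) = v x ^ 2 * ‖x‖ ^ p :=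
    fun x => by
      by_cases hx : x ∈ tsupport v
      · have h2 := norm_pow_mul_rpow_sub (fun h => hv0 (h ▸ hx)) 2 p
        push_cast at h2
        rw [← h2, EuclideanSpace.real_norm_sq_eq]
        simp only [Finset.sum_mul, Finset.mul_sum]
        exact Finset.sum_congr rfl fun j _ => by simp [EuclideanSpace.inner_single_right]; ring
      · simp [hvK x hx]
  have h := integral_sum_fderiv_mul_norm_rpow (μ := volume) hvc hv0
    (f := fun j y => v y ^ 2 * y j) (fun j => by fun_prop) (fun j x hx => by simp [hvK x hx]) p
    (fun j => 𝐞 j)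
  simp only [hdiv, hrad] at h
  rw [integral_add, integral_const_mul, integral_const_mul] at h
  · linear_combination h / 2
  all_goals
    exact (integrable_mul_norm_rpow hvc hv0 (by fun_prop)
      (fun x hx => by simp [hvK x hx]) p).const_mul _

theorem integral_lap_mul_mul_norm_rpow (hv : ContDiff ℝ 2 v) (hvc : HasCompactSupport v)
    (hv0 : (0 : Euc n) ∉ tsupport v) (p : ℝ) :
    ∫ x, lap n v x * v x * ‖x‖ ^ p
      = -(∫ x, gradNormSq v x * ‖x‖ ^ p) - p * ∫ x, v x * eulerDeriv v x * ‖x‖ ^ (p - 2) := by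
  have hv1 : ContDiff ℝ 1 v := hv.of_le (by norm_num)
  have hdv : ∀ w, ContDiff ℝ 1 fun x => fderiv ℝ v x w := fun w =>
    (hv.fderiv_right (by norm_num)).clm_apply contDiff_const
  have hΔ : Continuous (lap n v) := (ContDiff.lap (k := 0) hv).continuous
  have hvK : ∀ x ∉ tsupport v, v x = 0 := fun _ => image_eq_zero_of_notMem_tsupport
  have hdiv : ∀ x, (∑ j, fderiv ℝ (fun y => fderiv ℝ v y (𝐞 j) * v y) x (𝐞 j)) * ‖x‖ ^ p
      = lap n v x * v x * ‖x‖ ^ p + gradNormSq v x * ‖x‖ ^ p := fun x => by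
    have hj : ∀ j, fderiv ℝ (fun y => fderiv ℝ v y (𝐞 j) * v y) x (𝐞 j)
        = fderiv ℝ (fun y => fderiv ℝ v y (𝐞 j)) x (𝐞 j) * v x + fderiv ℝ v x (𝐞 j) ^ 2 :=
      fun j => by
        rw [fderiv_fun_mul ((hdv _).differentiable one_ne_zero x)
          (hv1.differentiable one_ne_zero x)]
        simp only [add_apply, smul_apply, smul_eq_mul]
        ring
    simp only [hj, Finset.sum_add_distrib, ← Finset.sum_mul, lap, gradNormSq, add_mul]
  have hrad : ∀ x, (∑ j, fderiv ℝ v x (𝐞 j) * v x * ⟪x, 𝐞 j⟫) * ‖x‖ ^ (p - 2)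
      = v x * eulerDeriv v x * ‖x‖ ^ (p - 2) := fun x => by
    simp only [eulerDeriv, Finset.mul_sum, EuclideanSpace.inner_single_right]
    congr 1
    exact Finset.sum_congr rfl fun j _ => by simp; ring
  have h := integral_sum_fderiv_mul_norm_rpow (μ := volume) hvc hv0
    (f := fun j y => fderiv ℝ v y (𝐞 j) * v y) (fun j => (hdv _).mul hv1)
    (fun j x hx => by simp [hvK x hx]) p (fun j => 𝐞 j)
  simp only [hdiv, hrad] at h
  rw [integral_add] at h
  · linear_combination h
  · exact integrable_mul_norm_rpow hvc hv0 (by fun_prop) (fun x hx => by simp [hvK x hx]) p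
  · exact integrable_mul_norm_rpow hvc hv0 hv1.continuous_gradNormSq
      (fun x hx => by simp [gradNormSq, fderiv_of_notMem_tsupport ℝ hx]) p

theorem sum_sq_mul_norm_rpow_eq {x : Euc n} (hx : x ≠ 0) (c p : ℝ) :
    (∑ j, (‖x‖ ^ 2 * fderiv ℝ v x (𝐞 j) + c * (v x * x j)) ^ 2) * ‖x‖ ^ (p - 4)
      = gradNormSq v x * ‖x‖ ^ p + (2 * c * (v x * eulerDeriv v x * ‖x‖ ^ (p - 2))
        + c ^ 2 * (v x ^ 2 * ‖x‖ ^ (p - 2))) := by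
  have hsq : ∑ j, (‖x‖ ^ 2 * fderiv ℝ v x (𝐞 j) + c * (v x * x j)) ^ 2
      = ‖x‖ ^ 4 * gradNormSq v x + 2 * c * ‖x‖ ^ 2 * (v x * eulerDeriv v x)
        + c ^ 2 * v x ^ 2 * ‖x‖ ^ 2 := by
    calc ∑ j, (‖x‖ ^ 2 * fderiv ℝ v x (𝐞 j) + c * (v x * x j)) ^ 2
        = ∑ j, (‖x‖ ^ 4 * fderiv ℝ v x (𝐞 j) ^ 2
            + 2 * c * ‖x‖ ^ 2 * v x * (x j * fderiv ℝ v x (𝐞 j)) + c ^ 2 * v x ^ 2 * x j ^ 2) :=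
          Finset.sum_congr rfl fun j _ => by ring
      _ = ‖x‖ ^ 4 * gradNormSq v x + 2 * c * ‖x‖ ^ 2 * v x * eulerDeriv v x
            + c ^ 2 * v x ^ 2 * ∑ j, x j ^ 2 := by
          rw [Finset.sum_add_distrib, Finset.sum_add_distrib, ← Finset.mul_sum, ← Finset.mul_sum,
            ← Finset.mul_sum, gradNormSq, eulerDeriv]
      _ = _ := by rw [← EuclideanSpace.real_norm_sq_eq]; ring
  have h4 := norm_pow_mul_rpow_sub hx 4 p
  have h2 := norm_pow_mul_rpow_sub hx 2 (p - 2)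
  rw [show (p - 2 - ((2 : ℕ) : ℝ)) = p - ((4 : ℕ) : ℝ) by push_cast; ring] at h2
  push_cast at h2 h4
  rw [hsq]
  linear_combination gradNormSq v x * h4 + (2 * c * (v x * eulerDeriv v x) + c ^ 2 * v x ^ 2) * h2

theorem weighted_hardy (hv : ContDiff ℝ 1 v) (hvc : HasCompactSupport v)
    (hv0 : (0 : Euc n) ∉ tsupport v) (p : ℝ) :
    ((n + p - 2) / 2) ^ 2 * ∫ x, v x ^ 2 * ‖x‖ ^ (p - 2) ≤ ∫ x, gradNormSq v x * ‖x‖ ^ p := by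
  set c : ℝ := (n + p - 2) / 2
  have hE := hv.continuous_eulerDeriv
  have hvK : ∀ x ∉ tsupport v, v x = 0 := fun _ => image_eq_zero_of_notMem_tsupport
  have hpt : ∀ x, (∑ j, (‖x‖ ^ 2 * fderiv ℝ v x (𝐞 j) + c * (v x * x j)) ^ 2) * ‖x‖ ^ (p - 4)
      = gradNormSq v x * ‖x‖ ^ p + (2 * c * (v x * eulerDeriv v x * ‖x‖ ^ (p - 2))
        + c ^ 2 * (v x ^ 2 * ‖x‖ ^ (p - 2))) := fun x => by
    by_cases hx : x ∈ tsupport v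
    · exact sum_sq_mul_norm_rpow_eq (fun h => hv0 (h ▸ hx)) c p
    · simp [gradNormSq, eulerDeriv, hvK x hx, fderiv_of_notMem_tsupport ℝ hx]
  have hpos : 0 ≤ ∫ x, (∑ j, (‖x‖ ^ 2 * fderiv ℝ v x (𝐞 j) + c * (v x * x j)) ^ 2)
      * ‖x‖ ^ (p - 4) :=
    integral_nonneg fun x => mul_nonneg (Finset.sum_nonneg fun j _ => sq_nonneg _)
      (Real.rpow_nonneg (norm_nonneg x) _)
  have iG : Integrable fun x => gradNormSq v x * ‖x‖ ^ p :=
    integrable_mul_norm_rpow hvc hv0 hv.continuous_gradNormSq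
      (fun x hx => by simp [gradNormSq, fderiv_of_notMem_tsupport ℝ hx]) p
  have iE : Integrable fun x => v x * eulerDeriv v x * ‖x‖ ^ (p - 2) :=
    integrable_mul_norm_rpow hvc hv0 (by fun_prop) (fun x hx => by simp [hvK x hx]) _
  have iJ : Integrable fun x => v x ^ 2 * ‖x‖ ^ (p - 2) :=
    integrable_mul_norm_rpow hvc hv0 (by fun_prop) (fun x hx => by simp [hvK x hx]) _
  simp only [hpt] at hpos
  rw [integral_add iG ((iE.const_mul _).fun_add (iJ.const_mul _)),
    integral_add (iE.const_mul _) (iJ.const_mul _), integral_const_mul, integral_const_mul,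
    integral_mul_eulerDeriv_mul_norm_rpow hv hvc hv0] at hpos
  linear_combination hpos

theorem sq_mul_wnorm2_le_wnorm2_lap_of_integral_lap_mul_le (hv : ContDiff ℝ 2 v)
    (hvc : HasCompactSupport v) (hv0 : (0 : Euc n) ∉ tsupport v) {A β : ℝ} (hA : 0 ≤ A)
    (h : ∫ x, lap n v x * v x * ‖x‖ ^ (-(β + 2)) ≤ -A * wnorm2 n (β + 4) v) :
    A ^ 2 * wnorm2 n (β + 4) v ≤ wnorm2 n β (lap n v) := by
  have hvK : ∀ x ∉ tsupport v, v x = 0 := fun _ => image_eq_zero_of_notMem_tsupport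
  have hΔ : Continuous (lap n v) := (ContDiff.lap (k := 0) hv).continuous
  have hpt : ∀ x, (‖x‖ ^ 2 * lap n v x + A * v x) ^ 2 * ‖x‖ ^ (-(β + 4))
      = lap n v x ^ 2 * ‖x‖ ^ (-β) + (2 * A * (lap n v x * v x * ‖x‖ ^ (-(β + 2)))
        + A ^ 2 * (v x ^ 2 * ‖x‖ ^ (-(β + 4)))) := fun x => by
    by_cases hx : x ∈ tsupport v
    · have hx0 : x ≠ 0 := fun h => hv0 (h ▸ hx)
      have h4 := norm_pow_mul_rpow_sub hx0 4 (-β)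
      have h2 := norm_pow_mul_rpow_sub hx0 2 (-(β + 2))
      push_cast at h4 h2
      rw [show -β - 4 = -(β + 4) by ring] at h4
      rw [show -(β + 2) - 2 = -(β + 4) by ring] at h2
      linear_combination lap n v x ^ 2 * h4 + 2 * A * lap n v x * v x * h2
    · simp [hvK x hx, lap_of_notMem_tsupport hx]
  have hpos : 0 ≤ ∫ x, (‖x‖ ^ 2 * lap n v x + A * v x) ^ 2 * ‖x‖ ^ (-(β + 4)) :=
    integral_nonneg fun x => mul_nonneg (sq_nonneg _) (Real.rpow_nonneg (norm_nonneg x) _)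
  have iL : Integrable fun x => lap n v x ^ 2 * ‖x‖ ^ (-β) :=
    integrable_mul_norm_rpow hvc hv0 (by fun_prop)
      (fun x hx => by simp [lap_of_notMem_tsupport hx]) _
  have iI : Integrable fun x => lap n v x * v x * ‖x‖ ^ (-(β + 2)) :=
    integrable_mul_norm_rpow hvc hv0 (by fun_prop) (fun x hx => by simp [hvK x hx]) _
  have iJ : Integrable fun x => v x ^ 2 * ‖x‖ ^ (-(β + 4)) :=
    integrable_mul_norm_rpow hvc hv0 (by fun_prop) (fun x hx => by simp [hvK x hx]) _
  simp only [hpt] at hpos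
  rw [integral_add iL ((iI.const_mul _).fun_add (iJ.const_mul _)),
    integral_add (iI.const_mul _) (iJ.const_mul _), integral_const_mul, integral_const_mul] at hpos
  have h2A := mul_le_mul_of_nonneg_left h (by positivity : (0 : ℝ) ≤ 2 * A)
  simp only [wnorm2] at h2A ⊢
  linear_combination hpos + h2A

theorem weighted_rellich (hv : ContDiff ℝ 2 v) (hvc : HasCompactSupport v)
    (hv0 : (0 : Euc n) ∉ tsupport v) {β : ℝ} (hβ₁ : -(n : ℝ) ≤ β) (hβ₂ : β ≤ n - 4) :
    ((n + β) * (n - 4 - β) / 4) ^ 2 * wnorm2 n (β + 4) v ≤ wnorm2 n β (lap n v) := by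
  have hv1 : ContDiff ℝ 1 v := hv.of_le (by norm_num)
  have hexp : -(β + 2) - 2 = -(β + 4) := by ring
  have hIq := integral_lap_mul_mul_norm_rpow hv hvc hv0 (-(β + 2))
  have hK := integral_mul_eulerDeriv_mul_norm_rpow hv1 hvc hv0 (-(β + 4))
  have hH := weighted_hardy hv1 hvc hv0 (-(β + 2))
  rw [hexp] at hIq hH
  refine sq_mul_wnorm2_le_wnorm2_lap_of_integral_lap_mul_le hv hvc hv0
    (by have := mul_nonneg (sub_nonneg.2 hβ₁) (sub_nonneg.2 hβ₂); linarith) ?_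
  rw [wnorm2]
  linear_combination hH + hIq + (β + 2) * hK

end TestFunction

end Euclidean

theorem polyharmonic_hardy_rellich_general (n m : ℕ) (α : ℝ)
    (hα₁ : -(n : ℝ) < α) (hα₂ : α < (n : ℝ) - 4 * m) (u : Euc n → ℝ)
    (hu : ContDiff ℝ (2 * m) u) (hc : HasCompactSupport u)
    (h0 : (0 : Euc n) ∉ tsupport u) :
    wnorm2 n α ((lap n)^[m] u)
      ≥ (∏ ℓ ∈ Finset.range m,
            (((n : ℝ) + (α + 4 * ℓ)) * ((n : ℝ) - 4 - (α + 4 * ℓ)) / 4) ^ 2)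
          * wnorm2 n (α + 4 * m) u := by
  induction m generalizing u with
  | zero => simp
  | succ m ih =>
    push_cast at hα₂
    have hu2 : ContDiff ℝ (2 * m + 2 : ℕ) u := by convert hu using 1; push_cast; ring
    have hΔu := ih (by linarith) (lap n u) hu2.lap
      (hc.of_isClosed_subset (isClosed_tsupport _) (tsupport_lap_subset u))
      (fun h => h0 (tsupport_lap_subset u h))
    have hstep := weighted_rellich (hu2.of_le (by norm_cast; omega)) hc h0
      (β := α + 4 * m) (by linarith) (by linarith)
    rw [Function.iterate_succ_apply, Finset.prod_range_succ, mul_assoc]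
    push_cast
    rw [show α + 4 * (m + 1 : ℝ) = α + 4 * m + 4 by ring]
    exact (mul_le_mul_of_nonneg_left hstep (Finset.prod_nonneg fun _ _ => sq_nonneg _)).trans hΔu

theorem polyharmonic_hardy_rellich (n m : ℕ) (α : ℝ) (hnm : 2 * m < n)
    (hα₁ : -(n : ℝ) < α) (hα₂ : α < (n : ℝ) - 4 * m) (u : Euc n → ℝ)
    (hu : ContDiff ℝ (2 * m) u) (hc : HasCompactSupport u)
    (h0 : (0 : Euc n) ∉ tsupport u) :
    wnorm2 n α ((lap n)^[m] u)
      ≥ (∏ ℓ ∈ Finset.range m,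
            (((n : ℝ) + (α + 4 * ℓ)) * ((n : ℝ) - 4 - (α + 4 * ℓ)) / 4) ^ 2)
          * wnorm2 n (α + 4 * m) u :=
  polyharmonic_hardy_rellich_general n m α hα₁ hα₂ u hu hc h0
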